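/- Every cancellative sequence of sets in a Banach space is admissible for testing compactness. That is, if every subsequence $f_{i_1(k)}\in F_{i_1(k)}$ has a further subsequence $f_{i_2(k)}$ with $\lim_{K\to\infty}\frac{1}{K}\|\sum_{k=1}^K f_{i_2(k)}\|_X=0$, then for every Banach space $Y$ and every compact linear operator $T:X\to Y$ one has $\limsup_{i\to\infty}\sup_{f_i\in F_i}\|Tf_i\|_Y=0$. -/

import Mathlib

/-!
Suppose there are `f k ∈ F (i₁ k)` with `ε < ‖T (f k)‖`. The norms `‖f k‖` cannot tend to
infinity: otherwise a lacunary subsequence, each term larger than its index plus the sum of all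
earlier ones, would have no further subsequence with Cesàro means tending to zero. So a
subsequence is bounded, and compactness of `T` gives a further one with `T (f k) → y`, where
`ε ≤ ‖y‖`. Along a subsequence with Cesàro means tending to zero, the Cesàro means of `T (f k)`
tend both to `y` and, by continuity of `T`, to `0`.
-/

open Filter Topology Finset

lemma Finset.sum_range_comp_le_sum_range_of_strictMono {a : ℕ → ℝ} (ha : ∀ m, 0 ≤ a m)
    {ψ : ℕ → ℕ} (hψ : StrictMono ψ) (K : ℕ) :
    ∑ k ∈ range K, a (ψ k) ≤ ∑ m ∈ range (ψ K), a m := by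
  induction K with
  | zero => exact sum_nonneg fun m _ => ha m
  | succ K ih =>
    calc ∑ k ∈ range (K + 1), a (ψ k)
        ≤ ∑ m ∈ range (ψ K), a m + a (ψ K) := by rw [sum_range_succ]; linarith
      _ = ∑ m ∈ range (ψ K + 1), a m := (sum_range_succ a (ψ K)).symm
      _ ≤ ∑ m ∈ range (ψ (K + 1)), a m :=
          sum_le_sum_of_subset_of_nonneg (range_subset_range.2 (hψ (Nat.lt_succ_self K)))
            fun m _ _ => ha m

lemma sum_range_add_le_of_two_mul_add_one_le {a : ℕ → ℝ} (h₀ : 1 ≤ a 0)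
    (hsucc : ∀ n, 2 * a n + 1 ≤ a (n + 1)) (n : ℕ) :
    ∑ m ∈ range n, a m + (n + 1) ≤ a n := by
  induction n with
  | zero => simpa using h₀
  | succ n ih =>
    rw [sum_range_succ]
    push_cast
    linarith [hsucc n]

lemma exists_strictMono_two_mul_add_one_le {u : ℕ → ℝ} (hu : Tendsto u atTop atTop) :
    ∃ φ : ℕ → ℕ, StrictMono φ ∧ 1 ≤ u (φ 0) ∧ ∀ n, 2 * u (φ n) + 1 ≤ u (φ (n + 1)) := by
  obtain ⟨φ, hφ₀, hφ⟩ := exists_seq_of_forall_finset_exists (fun k => 1 ≤ u k)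
    (fun k l => k < l ∧ 2 * u k + 1 ≤ u l) fun s _ => by
      have hlarge : ∀ᶠ l in atTop, 1 ≤ u l ∧ ∀ k ∈ s, k < l ∧ 2 * u k + 1 ≤ u l :=
        (hu.eventually_ge_atTop 1).and <| (eventually_all_finset s).2 fun k _ =>
          (eventually_gt_atTop k).and (hu.eventually_ge_atTop _)
      exact hlarge.exists
  exact ⟨φ, fun m n hmn => (hφ m n hmn).1, hφ₀ 0, fun n => (hφ n (n + 1) n.lt_succ_self).2⟩

/-- In a lacunary sequence the last term of any partial sum of a subsequence outweighs all the
others. -/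
lemma le_norm_sum_range_succ_of_lacunary {E : Type*} [SeminormedAddCommGroup E] {g : ℕ → E}
    (hg : ∀ n, ∑ m ∈ range n, ‖g m‖ + (n + 1) ≤ ‖g n‖) {ψ : ℕ → ℕ} (hψ : StrictMono ψ)
    (K : ℕ) : (K : ℝ) + 1 ≤ ‖∑ k ∈ range (K + 1), g (ψ k)‖ := by
  have hlast : ‖g (ψ K)‖ ≤ ‖∑ k ∈ range (K + 1), g (ψ k)‖ + ∑ k ∈ range K, ‖g (ψ k)‖ := by
    rw [sum_range_succ]
    calc ‖g (ψ K)‖ = ‖(∑ k ∈ range K, g (ψ k) + g (ψ K)) - ∑ k ∈ range K, g (ψ k)‖ := by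
          rw [add_sub_cancel_left]
      _ ≤ ‖∑ k ∈ range K, g (ψ k) + g (ψ K)‖ + ‖∑ k ∈ range K, g (ψ k)‖ := norm_sub_le _ _
      _ ≤ _ := add_le_add_right (norm_sum_le _ _) _
  have hprefix := sum_range_comp_le_sum_range_of_strictMono (fun m => norm_nonneg (g m)) hψ K
  have hK : (K : ℝ) ≤ ψ K := by exact_mod_cast hψ.le_apply
  linarith [hg (ψ K)]

lemma tendsto_norm_sum_range_div {F : Type*} [NormedAddCommGroup F] [NormedSpace ℝ F]
    {y : ℕ → F} {a : F} (hy : Tendsto y atTop (𝓝 a)) :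
    Tendsto (fun K : ℕ => ‖∑ k ∈ range K, y k‖ / K) atTop (𝓝 ‖a‖) := by
  refine hy.cesaro_smul.norm.congr fun K => ?_
  rw [norm_smul, norm_inv, Real.norm_natCast, inv_mul_eq_div]

lemma IsCompactOperator.exists_tendsto_subseq {𝕜 X Y : Type*} [NontriviallyNormedField 𝕜]
    [SeminormedAddCommGroup X] [NormedSpace 𝕜 X] [NormedAddCommGroup Y] [NormedSpace 𝕜 Y]
    {T : X →L[𝕜] Y} (hT : IsCompactOperator T) {x : ℕ → X} {C : ℝ} (hx : ∀ n, ‖x n‖ ≤ C) :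
    ∃ y, ∃ φ : ℕ → ℕ, StrictMono φ ∧ Tendsto (fun n => T (x (φ n))) atTop (𝓝 y) := by
  have hK := IsCompactOperator.isCompact_closure_image_of_bounded (f := (T : X →ₗ[𝕜] Y)) hT
    (Metric.isBounded_closedBall (x := (0 : X)) (r := C))
  obtain ⟨y, -, φ, hφ, hy⟩ := hK.tendsto_subseq (x := fun n => T (x n)) fun n =>
    subset_closure ⟨x n, mem_closedBall_zero_iff.2 (hx n), rfl⟩
  exact ⟨y, φ, hφ, hy⟩

def IsCancellative {X : Type*} [SeminormedAddCommGroup X] (F : ℕ → Set X) : Prop :=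
  ∀ i₁ : ℕ → ℕ, StrictMono i₁ → ∀ f : ℕ → X, (∀ k, f k ∈ F (i₁ k)) →
    ∃ i₂ : ℕ → ℕ, StrictMono i₂ ∧
      Tendsto (fun K : ℕ => ‖∑ k ∈ range K, f (i₂ k)‖ / K) atTop (𝓝 0)

namespace IsCancellative

variable {X : Type*} [SeminormedAddCommGroup X] {F : ℕ → Set X}

lemma not_tendsto_norm_atTop (hF : IsCancellative F) {i₁ : ℕ → ℕ} (hi₁ : StrictMono i₁)
    {f : ℕ → X} (hf : ∀ k, f k ∈ F (i₁ k)) : ¬Tendsto (fun k => ‖f k‖) atTop atTop := by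
  intro hf_top
  obtain ⟨φ, hφ, hφ₀, hφ_succ⟩ := exists_strictMono_two_mul_add_one_le hf_top
  have hlacunary := sum_range_add_le_of_two_mul_add_one_le (a := fun n => ‖f (φ n)‖) hφ₀ hφ_succ
  obtain ⟨ψ, hψ, hmeans⟩ := hF _ (hi₁.comp hφ) _ fun k => hf (φ k)
  obtain ⟨K, hK⟩ := ((hmeans.comp (tendsto_add_atTop_nat 1)).eventually
    (gt_mem_nhds zero_lt_one)).exists
  have hbound := le_norm_sum_range_succ_of_lacunary hlacunary hψ K
  simp only [Function.comp_apply, Nat.cast_add, Nat.cast_one] at hK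
  rw [div_lt_one (by positivity)] at hK
  linarith

lemma eq_zero_of_tendsto {𝕜 Y : Type*} [NontriviallyNormedField 𝕜] [NormedSpace 𝕜 X]
    [NormedAddCommGroup Y] [NormedSpace 𝕜 Y] [NormedSpace ℝ Y] (hF : IsCancellative F)
    (T : X →L[𝕜] Y) {i₁ : ℕ → ℕ} (hi₁ : StrictMono i₁) {f : ℕ → X}
    (hf : ∀ k, f k ∈ F (i₁ k)) {y : Y} (hy : Tendsto (fun k => T (f k)) atTop (𝓝 y)) :
    y = 0 := by
  obtain ⟨ψ, hψ, hmeans⟩ := hF i₁ hi₁ f hf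
  have hTmeans : Tendsto (fun K : ℕ => ‖∑ k ∈ range K, T (f (ψ k))‖ / K) atTop (𝓝 0) := by
    refine squeeze_zero (fun K => by positivity) (fun K => ?_) (by simpa using hmeans.const_mul ‖T‖)
    rw [← map_sum, mul_div_assoc']
    gcongr
    exact T.le_opNorm _
  exact norm_eq_zero.1 <| tendsto_nhds_unique
    (tendsto_norm_sum_range_div (hy.comp hψ.tendsto_atTop)) hTmeans

end IsCancellative

theorem stmt2.{u, v} {X : Type u} [NormedAddCommGroup X] [NormedSpace ℂ X]
    [CompleteSpace X] (F : ℕ → Set X)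
    (hcanc : ∀ (i₁ : ℕ → ℕ), StrictMono i₁ → ∀ f : ℕ → X, (∀ k, f k ∈ F (i₁ k)) →
      ∃ i₂ : ℕ → ℕ, StrictMono i₂ ∧
        Tendsto (fun K : ℕ => ‖∑ k ∈ Finset.range K, f (i₂ k)‖ / K) atTop (nhds 0)) :
    ∀ (Y : Type v) [NormedAddCommGroup Y] [NormedSpace ℂ Y] [CompleteSpace Y]
      (T : X →L[ℂ] Y), IsCompactOperator ⇑T →
        ∀ ε : ℝ, 0 < ε → ∃ N : ℕ, ∀ i ≥ N, ∀ f ∈ F i, ‖T f‖ ≤ ε := by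
  have hF : IsCancellative F := hcanc
  intro Y _ _ _ T hT ε hε
  by_contra! hbad
  obtain ⟨i₁, hi₁, hbad_i₁⟩ := extraction_of_frequently_atTop
    (P := fun i => ∃ f ∈ F i, ε < ‖T f‖) (frequently_atTop.2 hbad)
  choose f hfF hTf using hbad_i₁
  obtain ⟨C, hC⟩ : ∃ C, ∃ᶠ k in atTop, ‖f k‖ ≤ C := by
    have hunbounded := hF.not_tendsto_norm_atTop hi₁ hfF
    simp only [tendsto_atTop, not_forall, not_eventually, not_le] at hunbounded
    obtain ⟨C, hC⟩ := hunbounded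
    exact ⟨C, hC.mono fun k => le_of_lt⟩
  obtain ⟨j, hj, hjC⟩ := extraction_of_frequently_atTop hC
  obtain ⟨y, m, hm, hy⟩ := hT.exists_tendsto_subseq hjC
  have hy_zero : y = 0 := hF.eq_zero_of_tendsto T (hi₁.comp (hj.comp hm)) (fun k => hfF _) hy
  have hy_large : ε ≤ ‖y‖ := ge_of_tendsto' hy.norm fun k => (hTf _).le
  rw [hy_zero, norm_zero] at hy_large
  linarith
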